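/- Let H be a connected k-uniform hypergraph with at least one edge and signless Laplacian eigenpair (ρ, x). Then Γ(H) = 1 if and only if there is a constant c such that for every edge e ∈ E the sum of the degrees of its vertices satisfies ∑_{v∈e} d(v) = c. -/

import Mathlib

open Finset Matrix

variable {V : Type*} [Fintype V] [DecidableEq V]

/-- The incidence matrix of a hypergraph with vertex type `V` and edge set `E`:
`B(v,e) = 1` if `v ∈ e` and `0` otherwise. -/
def inc (E : Finset (Finset V)) : Matrix V ↥E ℝ :=
  fun v e => if v ∈ (e : Finset V) then 1 else 0

/-- The signless Laplacian matrix `Q = B * Bᵀ`. -/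
def signlessLap (E : Finset (Finset V)) : Matrix V V ℝ :=
  inc E * (inc E)ᵀ

/-- The degree of a vertex: the number of edges containing it. -/
def deg (E : Finset (Finset V)) (v : V) : ℕ :=
  (E.filter fun e => v ∈ e).card

/-- A hypergraph is connected if the reflexive-transitive closure of the relation
"`u ≠ v` and some edge contains both `u` and `v`" relates every pair of vertices. -/
def HConnected (E : Finset (Finset V)) : Prop :=
  ∀ u v : V, Relation.ReflTransGen (fun a b => a ≠ b ∧ ∃ e ∈ E, a ∈ e ∧ b ∈ e) u v

/-- A hypergraph is regular if all vertices have the same degree. -/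
def HRegular (E : Finset (Finset V)) : Prop :=
  ∃ r, ∀ v : V, deg E v = r

/-- A signless Laplacian eigenpair `(ρ, x)`: `x` is entrywise positive,
normalized by `∑ v, x v ^ 2 = 1`, and `Q x = ρ x`. -/
def Eigenpair (E : Finset (Finset V)) (ρ : ℝ) (x : V → ℝ) : Prop :=
  (∀ v, 0 < x v) ∧ (∑ v, x v ^ 2 = 1) ∧ (signlessLap E).mulVec x = ρ • x


/-!
Write `x(e) = ∑_{v ∈ e} x_v`, so that `(Q x)_v = ∑_{e ∋ v} x(e)`. If all `x(e)` equal `m > 0`,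
then `ρ x = m d`; summing over an edge gives `∑_{v ∈ e} d(v) = ρ` for every edge. Conversely, if
`∑_{v ∈ e} d(v) = c` for every edge, then `Q d = c d`; since `Q` is symmetric and `⟨x, d⟩ > 0`,
`ρ = c`. For a connected hypergraph the `ρ`-eigenspace of a positive eigenvector `x` is a line:
if `Q y = ρ y`, then `y - t x` with `t = min_v y_v / x_v` is a nonnegative eigenvector with a zero,
and zeros of such a vector spread along edges. So `d = t x` with `t ≠ 0`, and `x(e) = c / t`.
-/

theorem IsGreatest.eq_iff_exists_forall_eq_of_isLeast {α β : Type*} [PartialOrder β]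
    {s : Set α} {f : α → β} {a b : β} (ha : IsGreatest (f '' s) a) (hb : IsLeast (f '' s) b) :
    a = b ↔ ∃ m, ∀ i ∈ s, f i = m := by
  constructor
  · rintro rfl
    exact ⟨a, fun i hi => le_antisymm (ha.2 ⟨i, hi, rfl⟩) (hb.2 ⟨i, hi, rfl⟩)⟩
  · rintro ⟨m, hm⟩
    obtain ⟨i, hi, rfl⟩ := ha.1
    obtain ⟨j, hj, rfl⟩ := hb.1
    rw [hm i hi, hm j hj]

theorem Matrix.IsSymm.eq_of_mulVec_eq_smul {n R : Type*} [Fintype n] [CommRing R]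
    [IsDomain R] {A : Matrix n n R} (hA : A.IsSymm) {x y : n → R} {a b : R}
    (hx : A *ᵥ x = a • x) (hy : A *ᵥ y = b • y) (hxy : x ⬝ᵥ y ≠ 0) : a = b := by
  refine mul_right_cancel₀ hxy ?_
  calc a * (x ⬝ᵥ y) = (A *ᵥ x) ⬝ᵥ y := by rw [hx, smul_dotProduct, smul_eq_mul]
    _ = x ⬝ᵥ (A *ᵥ y) := by rw [← vecMul_transpose, hA.eq, dotProduct_mulVec]
    _ = b * (x ⬝ᵥ y) := by rw [hy, dotProduct_smul, smul_eq_mul]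

section SignlessLaplacian

variable {E : Finset (Finset V)}

theorem signlessLap_mulVec_apply (x : V → ℝ) (v : V) :
    (signlessLap E *ᵥ x) v = ∑ e ∈ E with v ∈ e, ∑ u ∈ e, x u := by
  simp only [signlessLap, mulVec, mul_apply, dotProduct, transpose_apply, inc, sum_mul,
    ite_mul, one_mul, zero_mul, mul_ite, mul_one, mul_zero]
  rw [sum_comm, sum_filter, ← sum_coe_sort E]
  refine sum_congr rfl fun e _ => ?_
  split_ifs with hv
  · rw [sum_ite_mem, univ_inter]
  · simp

theorem signlessLap_mulVec_of_forall_sum_eq {x : V → ℝ} {m : ℝ}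
    (hm : ∀ e ∈ E, ∑ u ∈ e, x u = m) : signlessLap E *ᵥ x = fun v => m * deg E v := by
  funext v
  rw [signlessLap_mulVec_apply, sum_congr rfl fun e he => hm e (mem_filter.1 he).1, sum_const,
    nsmul_eq_mul, deg, mul_comm]

theorem sum_deg_eq_of_forall_sum_eq {x : V → ℝ} {ρ m : ℝ} (heig : signlessLap E *ᵥ x = ρ • x)
    (hm : ∀ e ∈ E, ∑ u ∈ e, x u = m) (hm0 : m ≠ 0) {e : Finset V} (he : e ∈ E) :
    ∑ v ∈ e, (deg E v : ℝ) = ρ := by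
  have hdeg : ∀ v, m * deg E v = ρ * x v := fun v =>
    congrFun ((signlessLap_mulVec_of_forall_sum_eq hm).symm.trans heig) v
  refine mul_left_cancel₀ hm0 ?_
  rw [mul_sum, sum_congr rfl fun v _ => hdeg v, ← mul_sum, hm e he, mul_comm]

theorem eq_zero_of_mem_of_signlessLap_mulVec_apply_eq_zero {z : V → ℝ} (hz : 0 ≤ z) {a b : V}
    (ha : (signlessLap E *ᵥ z) a = 0) {e : Finset V} (he : e ∈ E) (hae : a ∈ e) (hbe : b ∈ e) :
    z b = 0 := by
  rw [signlessLap_mulVec_apply, sum_eq_zero_iff_of_nonneg fun e _ => sum_nonneg fun u _ => hz u]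
    at ha
  exact (sum_eq_zero_iff_of_nonneg fun u _ => hz u).1 (ha e (mem_filter.2 ⟨he, hae⟩)) b hbe

theorem eq_zero_of_signlessLap_mulVec_eq_smul (hconn : HConnected E) {z : V → ℝ} (hz : 0 ≤ z)
    {ρ : ℝ} (heig : signlessLap E *ᵥ z = ρ • z) {a : V} (ha : z a = 0) : z = 0 := by
  suffices ∀ b, z b = 0 from funext this
  intro b
  induction hconn a b with
  | refl => exact ha
  | tail _ hcd ih =>
    obtain ⟨-, e, he, hce, hde⟩ := hcd
    refine eq_zero_of_mem_of_signlessLap_mulVec_apply_eq_zero hz ?_ he hce hde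
    rw [heig, Pi.smul_apply, ih, smul_zero]

theorem exists_eq_smul_of_signlessLap_mulVec_eq_smul (hconn : HConnected E) {x y : V → ℝ}
    {ρ : ℝ} (hxpos : ∀ v, 0 < x v) (hx : signlessLap E *ᵥ x = ρ • x)
    (hy : signlessLap E *ᵥ y = ρ • y) : ∃ t : ℝ, y = t • x := by
  cases isEmpty_or_nonempty V
  · exact ⟨0, Subsingleton.elim _ _⟩
  obtain ⟨w, hw⟩ := Finite.exists_min fun v => y v / x v
  set t := y w / x w
  have hz : 0 ≤ y - t • x := fun v => by
    simpa [sub_nonneg, mul_comm] using (le_div_iff₀ (hxpos v)).1 (hw v)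
  have heig : signlessLap E *ᵥ (y - t • x) = ρ • (y - t • x) := by
    rw [mulVec_sub, mulVec_smul, hx, hy, smul_sub, smul_comm]
  have hzw : (y - t • x) w = 0 := by
    simp [t, div_mul_cancel₀ _ (hxpos w).ne']
  exact ⟨t, sub_eq_zero.1 (eq_zero_of_signlessLap_mulVec_eq_smul hconn hz heig hzw)⟩

theorem exists_forall_sum_deg_eq_of_forall_sum_eq {x : V → ℝ} {ρ m : ℝ}
    (heig : signlessLap E *ᵥ x = ρ • x) (hm : ∀ e ∈ E, ∑ u ∈ e, x u = m) (hm0 : m ≠ 0)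
    {e₀ : Finset V} (he₀ : e₀ ∈ E) : ∃ c : ℕ, ∀ e ∈ E, ∑ v ∈ e, deg E v = c := by
  have hdeg := fun e (he : e ∈ E) => sum_deg_eq_of_forall_sum_eq heig hm hm0 he
  exact ⟨∑ v ∈ e₀, deg E v, fun e he => by exact_mod_cast (hdeg e he).trans (hdeg e₀ he₀).symm⟩

theorem exists_forall_sum_eq_of_forall_sum_deg_eq (hconn : HConnected E) {x : V → ℝ} {ρ : ℝ}
    (hxpos : ∀ v, 0 < x v) (heig : signlessLap E *ᵥ x = ρ • x) {c : ℕ}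
    (hc : ∀ e ∈ E, ∑ v ∈ e, deg E v = c) {v₀ : V} (hv₀ : 0 < deg E v₀) :
    ∃ m, ∀ e ∈ E, ∑ v ∈ e, x v = m := by
  set d : V → ℝ := fun v => deg E v
  have hdc : ∀ e ∈ E, ∑ v ∈ e, d v = c := fun e he => by simp only [d]; exact_mod_cast hc e he
  have hd : signlessLap E *ᵥ d = (c : ℝ) • d := signlessLap_mulVec_of_forall_sum_eq hdc
  have hd₀ : 0 < d v₀ := Nat.cast_pos.2 hv₀
  have hxd : x ⬝ᵥ d ≠ 0 := (sum_pos' (fun v _ => mul_nonneg (hxpos v).le (Nat.cast_nonneg _))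
    ⟨v₀, mem_univ _, mul_pos (hxpos v₀) hd₀⟩).ne'
  have hQ : (signlessLap E).IsSymm := by
    rw [signlessLap, IsSymm, transpose_mul, transpose_transpose]
  have hρc : ρ = c := hQ.eq_of_mulVec_eq_smul heig hd hxd
  obtain ⟨t, hdt⟩ := exists_eq_smul_of_signlessLap_mulVec_eq_smul hconn hxpos heig (hρc ▸ hd)
  have ht : t ≠ 0 := by
    rintro rfl
    simp [hdt] at hd₀
  refine ⟨c / t, fun e he => ?_⟩
  rw [eq_div_iff ht, ← hdc e he, hdt]
  simp only [Pi.smul_apply, smul_eq_mul, ← mul_sum, mul_comm]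

end SignlessLaplacian

theorem Gamma_eq_one_iff_general {V : Type*} [Fintype V] [DecidableEq V] (k : ℕ)
    (hk : 2 ≤ k) (E : Finset (Finset V)) (hunif : ∀ e ∈ E, e.card = k)
    (hconn : HConnected E)
    (ρ : ℝ) (x : V → ℝ) (hx : Eigenpair E ρ x)
    (xemax xemin : ℝ)
    (hemax : IsGreatest ((fun e : Finset V => ∑ v ∈ e, x v) '' ↑E) xemax)
    (hemin : IsLeast ((fun e : Finset V => ∑ v ∈ e, x v) '' ↑E) xemin) :
    xemax / xemin = 1 ↔ ∃ c : ℕ, ∀ e ∈ E, ∑ v ∈ e, deg E v = c := by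
  obtain ⟨hxpos, -, heig⟩ := hx
  have hne : ∀ e ∈ E, e.Nonempty := fun e he => card_pos.1 (by rw [hunif e he]; omega)
  have hpos : ∀ e ∈ E, 0 < ∑ v ∈ e, x v := fun e he => sum_pos (fun v _ => hxpos v) (hne e he)
  obtain ⟨e₀, he₀, hxemin⟩ := hemin.1
  obtain ⟨v₀, hv₀⟩ := hne e₀ he₀
  have hdeg₀ : 0 < deg E v₀ := card_pos.2 ⟨e₀, mem_filter.2 ⟨he₀, hv₀⟩⟩
  have hxemin_pos : 0 < xemin := by rw [← hxemin]; exact hpos e₀ he₀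
  rw [div_eq_one_iff_eq hxemin_pos.ne', hemax.eq_iff_exists_forall_eq_of_isLeast hemin]
  constructor
  · rintro ⟨m, hm⟩
    exact exists_forall_sum_deg_eq_of_forall_sum_eq heig hm (hm e₀ he₀ ▸ hpos e₀ he₀).ne' he₀
  · rintro ⟨c, hc⟩
    exact exists_forall_sum_eq_of_forall_sum_deg_eq hconn hxpos heig hc hdeg₀

/-- For a connected `k`-graph with at least one edge and signless Laplacian eigenpair
`(ρ, x)`: `Γ(H) = 1` iff the sum of the degrees of the vertices of an edge is the
same constant for every edge. -/
theorem Gamma_eq_one_iff {V : Type*} [Fintype V] [DecidableEq V] (k : ℕ)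
    (hk : 2 ≤ k) (E : Finset (Finset V)) (hunif : ∀ e ∈ E, e.card = k)
    (hconn : HConnected E) (hE : E.Nonempty)
    (ρ : ℝ) (x : V → ℝ) (hx : Eigenpair E ρ x)
    (xemax xemin : ℝ)
    (hemax : IsGreatest ((fun e : Finset V => ∑ v ∈ e, x v) '' ↑E) xemax)
    (hemin : IsLeast ((fun e : Finset V => ∑ v ∈ e, x v) '' ↑E) xemin) :
    xemax / xemin = 1 ↔ ∃ c : ℕ, ∀ e ∈ E, ∑ v ∈ e, deg E v = c :=
  Gamma_eq_one_iff_general k hk E hunif hconn ρ x hx xemax xemin hemax hemin
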